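/- arXiv:2002.01306 — 2 statements merged into one kernel-verified Lean document; each statement's English description precedes it below -/
import Mathlib

section
/- Fix real numbers r and ϑ with 0 < r < √((√5 − 1)/2) and 0 < ϑ < 1, and define f(d) = √ϑ/(1 − r²)^{d/4} and g(d) = (r/√(1 − r²))^d · (√(1 + 2ϑ(1 − r²)^{d/2}/r^{2d}) − 1) for positive integers d. Then f(d)/g(d) → 1/√2 as d → ∞. -/
open Filter Topology

/-! With `s = (1 - r²)^{1/4}` and `y = (r/s)^d`, both bounds carry the common factor `s^{-d}`
and `f(d)/g(d) = √ϑ / (√(y² + 2ϑ) - y)`. The condition on `r` says exactly `r² + r⁴ < 1`,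
i.e. `r < s`, so `y → 0` and the quotient tends to `√ϑ/√(2ϑ) = 1/√2`. -/

lemma sq_add_self_lt_one {x : ℝ} (hx : 0 ≤ x) (hx' : x < (√5 - 1) / 2) : x ^ 2 + x < 1 := by
  have h5 : √5 ^ 2 = 5 := Real.sq_sqrt (by norm_num)
  -- `x² + x - 1 = (x - (√5 - 1)/2) (x + (√5 + 1)/2)`
  nlinarith [Real.sqrt_nonneg 5]

lemma mul_sqrt_one_add_div_sq_sub_one {y : ℝ} (hy : 0 < y) (c : ℝ) :
    y * (√(1 + c / y ^ 2) - 1) = √(y ^ 2 + c) - y := by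
  have hsplit : y ^ 2 + c = y ^ 2 * (1 + c / y ^ 2) := by field_simp
  rw [hsplit, Real.sqrt_mul (sq_nonneg y), Real.sqrt_sq hy.le]
  ring

lemma pow_rpow_natCast_div_self {s : ℝ} (hs : 0 ≤ s) (d : ℕ) {n : ℕ} (hn : n ≠ 0) :
    (s ^ n) ^ ((d : ℝ) / n) = s ^ d := by
  rw [← Real.rpow_natCast_mul hs, mul_div_cancel₀ _ (Nat.cast_ne_zero.2 hn), Real.rpow_natCast]

lemma bounds_quotient_eq {r s : ℝ} (hr : 0 < r) (hs : 0 < s) (c : ℝ) (d : ℕ) :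
    √c / (s ^ 4) ^ ((d : ℝ) / 4) /
        ((r / √(s ^ 4)) ^ d * (√(1 + 2 * c * (s ^ 4) ^ ((d : ℝ) / 2) / r ^ (2 * d)) - 1)) =
      √c / (√(((r / s) ^ d) ^ 2 + 2 * c) - (r / s) ^ d) := by
  have hs4 : s ^ 4 = (s ^ 2) ^ 2 := by ring
  have hquarter : (s ^ 4) ^ ((d : ℝ) / 4) = s ^ d :=
    mod_cast pow_rpow_natCast_div_self hs.le d four_ne_zero
  have hhalf : (s ^ 4) ^ ((d : ℝ) / 2) = (s ^ 2) ^ d := by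
    rw [hs4]
    exact_mod_cast pow_rpow_natCast_div_self (sq_nonneg s) d two_ne_zero
  have hy : 0 < (r / s) ^ d := by positivity
  rw [← mul_sqrt_one_add_div_sq_sub_one hy, hquarter, hhalf, hs4, Real.sqrt_sq (by positivity),
    div_pow, div_pow, div_pow, ← pow_mul, ← pow_mul, ← pow_mul, mul_comm 2 d]
  field_simp
  ring

lemma tendsto_sqrt_div_sqrt_sq_add_sub {α : Type*} {l : Filter α} {y : α → ℝ}
    (hy : Tendsto y l (𝓝 0)) {c : ℝ} (hc : 0 < c) :
    Tendsto (fun x => √c / (√(y x ^ 2 + 2 * c) - y x)) l (𝓝 (1 / √2)) := by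
  have hden : Tendsto (fun x => √(y x ^ 2 + 2 * c) - y x) l (𝓝 (√(2 * c))) := by
    simpa using (((hy.pow 2).add_const (2 * c)).sqrt).sub hy
  have hlim : √c / √(2 * c) = 1 / √2 := by
    rw [Real.sqrt_mul zero_le_two, mul_comm, ← div_div, div_self (Real.sqrt_pos.2 hc).ne']
  rw [← hlim]
  exact tendsto_const_nhds.div hden (Real.sqrt_pos.2 (by positivity)).ne'

theorem bounds_quotient_tendsto_small_r_general
    (r ϑ : ℝ) (hr0 : 0 < r) (hr1 : r < Real.sqrt ((Real.sqrt 5 - 1) / 2))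
    (hϑ0 : 0 < ϑ) :
    Tendsto (fun d : ℕ =>
        Real.sqrt ϑ / (1 - r ^ 2) ^ ((d : ℝ) / 4) /
          ((r / Real.sqrt (1 - r ^ 2)) ^ d *
            (Real.sqrt (1 + 2 * ϑ * (1 - r ^ 2) ^ ((d : ℝ) / 2) / r ^ (2 * d)) - 1)))
      atTop (nhds (1 / Real.sqrt 2)) := by
  have hr2 : r ^ 2 < (√5 - 1) / 2 := (Real.lt_sqrt hr0.le).1 hr1
  have hr4 : r ^ 4 < 1 - r ^ 2 := by nlinarith [sq_add_self_lt_one (sq_nonneg r) hr2]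
  obtain ⟨s, hs, hs4⟩ : ∃ s : ℝ, 0 < s ∧ s ^ 4 = 1 - r ^ 2 :=
    have hQ : 0 < 1 - r ^ 2 := by linarith [pow_pos hr0 4]
    ⟨√√(1 - r ^ 2), Real.sqrt_pos.2 (Real.sqrt_pos.2 hQ), by
      rw [show 4 = 2 * 2 from rfl, pow_mul, Real.sq_sqrt (Real.sqrt_nonneg _),
        Real.sq_sqrt hQ.le]⟩
  have hrs : r / s < 1 := (div_lt_one hs).2 <|
    (pow_lt_pow_iff_left₀ hr0.le hs.le four_ne_zero).1 (hs4 ▸ hr4)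
  rw [← hs4]
  exact (tendsto_sqrt_div_sqrt_sq_add_sub
    (tendsto_pow_atTop_nhds_zero_of_lt_one (div_pos hr0 hs).le hrs) hϑ0).congr
    fun d => (bounds_quotient_eq hr0 hs ϑ d).symm

/-- **Corollary, case 3.** For fixed `0 < r < √((√5-1)/2)` and `0 < ϑ < 1`, with
`f(d) = √ϑ/(1-r²)^{d/4}` and
`g(d) = (r/√(1-r²))^d (√(1 + 2ϑ(1-r²)^{d/2}/r^{2d}) - 1)`, the quotient
`f(d)/g(d)` tends to `1/√2` as `d → ∞`. -/
theorem bounds_quotient_tendsto_small_r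
    (r ϑ : ℝ) (hr0 : 0 < r) (hr1 : r < Real.sqrt ((Real.sqrt 5 - 1) / 2))
    (hϑ0 : 0 < ϑ) (hϑ1 : ϑ < 1) :
    Tendsto (fun d : ℕ =>
        Real.sqrt ϑ / (1 - r ^ 2) ^ ((d : ℝ) / 4) /
          ((r / Real.sqrt (1 - r ^ 2)) ^ d *
            (Real.sqrt (1 + 2 * ϑ * (1 - r ^ 2) ^ ((d : ℝ) / 2) / r ^ (2 * d)) - 1)))
      atTop (nhds (1 / Real.sqrt 2)) :=
  bounds_quotient_tendsto_small_r_general r ϑ hr0 hr1 hϑ0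
end

section
/- Fix an integer n ≥ 2 and a real number r with √2/2 < r < 1, and define f(d) = n(n−1)/2^d and g(d) = 1 − [(1 − r^d)(1 − (n − 1)(1 − r²)^{d/2}/2)]^n for positive integers d. Then g(d)/f(d) is asymptotically equivalent to (2r)^d/(n−1) as d → ∞, and consequently g(d)/f(d) → ∞ as d → ∞. -/
open Filter Topology Asymptotics

/-! With `s = √(1 - r²)`, the hypothesis `r > √2/2` says exactly `s < r`, so the base
`x_d = 1 - (1 - r^d)(1 - (n-1)s^d/2)` of Fisher's bound is asymptotic to `r^d`. As
`1 - (1 - t)^n ~ n t` for `t → 0`, this gives `g(d) = 1 - (1 - x_d)^n ~ n r^d`; dividing by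
`f(d) = n(n-1)/2^d` leaves `(2r)^d/(n-1)`, which tends to infinity since `2r > 1`. -/

lemma rpow_natCast_div_two {a : ℝ} (ha : 0 ≤ a) (d : ℕ) : a ^ ((d : ℝ) / 2) = √a ^ d := by
  rw [Real.sqrt_eq_rpow, ← Real.rpow_mul_natCast ha]
  ring_nf

lemma sqrt_one_sub_sq_lt_self {r : ℝ} (hr : √2 / 2 < r) : √(1 - r ^ 2) < r := by
  have hr0 : 0 < r := lt_of_le_of_lt (by positivity) hr
  have hsq : (√2 / 2) ^ 2 < r ^ 2 := pow_lt_pow_left₀ hr (by positivity) two_ne_zero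
  rw [div_pow, Real.sq_sqrt zero_le_two] at hsq
  rw [Real.sqrt_lt' hr0]
  linarith

lemma isEquivalent_one_sub_one_sub_pow {n : ℕ} (hn : n ≠ 0) :
    (fun t : ℝ => 1 - (1 - t) ^ n) ~[𝓝 0] fun t => n * t := by
  have hderiv : HasDerivAt (fun t : ℝ => 1 - (1 - t) ^ n) n 0 := by
    simpa using ((hasDerivAt_id (0 : ℝ)).const_sub 1).pow n |>.const_sub 1
  have hlittle := hderiv.isLittleO
  simp only [sub_zero, one_pow, sub_self, smul_eq_mul] at hlittle
  refine IsLittleO.isEquivalent ?_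
  exact (hlittle.congr_left fun t => by simp only [Pi.sub_apply]; ring).trans_isBigO
    (isBigO_self_const_mul (Nat.cast_ne_zero.2 hn) _ _)

lemma isEquivalent_one_sub_one_sub_pow_mul_one_sub_pow {r s : ℝ} (c : ℝ) (hs : 0 ≤ s)
    (hsr : s < r) (hr : r ≤ 1) :
    (fun d : ℕ => 1 - (1 - r ^ d) * (1 - c * s ^ d)) ~[atTop] fun d => r ^ d := by
  have hr0 : 0 < r := hs.trans_lt hsr
  have hsd : Tendsto (fun d : ℕ => s ^ d) atTop (𝓝 0) :=
    tendsto_pow_atTop_nhds_zero_of_lt_one hs (hsr.trans_le hr)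
  have hsrd : Tendsto (fun d : ℕ => (s / r) ^ d) atTop (𝓝 0) :=
    tendsto_pow_atTop_nhds_zero_of_lt_one (by positivity) ((div_lt_one hr0).2 hsr)
  refine isEquivalent_of_tendsto_one ?_
  have hlim : Tendsto (fun d : ℕ => 1 + c * (s / r) ^ d - c * s ^ d) atTop (𝓝 1) := by
    simpa using ((hsrd.const_mul c).const_add 1).sub (hsd.const_mul c)
  refine hlim.congr fun d => ?_
  have : r ^ d ≠ 0 := pow_ne_zero d hr0.ne'
  simp only [Pi.div_apply, div_pow]
  field_simp
  ring

/-- The bound `g(d)` of Gorban, Burton and Tyukin on the probability that `n` points fail to be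
Fisher separable. -/
noncomputable def fisherFailureBound (n : ℕ) (r : ℝ) (d : ℕ) : ℝ :=
  1 - ((1 - r ^ d) * (1 - ((n : ℝ) - 1) * (1 - r ^ 2) ^ ((d : ℝ) / 2) / 2)) ^ n

/-- The bound `f(d)` on the probability that `n` points fail to be linearly separable. -/
noncomputable def linearFailureBound (n d : ℕ) : ℝ :=
  (n : ℝ) * ((n : ℝ) - 1) / 2 ^ d

lemma fisherFailureBound_isEquivalent {n : ℕ} (hn : n ≠ 0) {r : ℝ} (hr0 : √2 / 2 < r)
    (hr1 : r < 1) :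
    fisherFailureBound n r ~[atTop] fun d => n * r ^ d := by
  have hr : 0 < r := lt_of_le_of_lt (by positivity) hr0
  have hx := isEquivalent_one_sub_one_sub_pow_mul_one_sub_pow (((n : ℝ) - 1) / 2)
    (Real.sqrt_nonneg _) (sqrt_one_sub_sq_lt_self hr0) hr1.le
  have hx0 := hx.symm.tendsto_nhds (tendsto_pow_atTop_nhds_zero_of_lt_one hr.le hr1)
  refine ((isEquivalent_one_sub_one_sub_pow hn).comp_tendsto hx0).congr_left ?_ |>.trans
    (IsEquivalent.refl.mul hx)
  refine Eventually.of_forall fun d => ?_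
  simp only [Function.comp_apply, sub_sub_cancel, fisherFailureBound, mul_div_right_comm,
    rpow_natCast_div_two (by nlinarith : (0 : ℝ) ≤ 1 - r ^ 2)]

lemma fisherFailureBound_div_linearFailureBound_isEquivalent {n : ℕ} (hn : 2 ≤ n) {r : ℝ}
    (hr0 : √2 / 2 < r) (hr1 : r < 1) :
    fisherFailureBound n r / linearFailureBound n ~[atTop]
      fun d => (2 * r) ^ d / ((n : ℝ) - 1) := by
  have hn0 : (n : ℝ) ≠ 0 := by positivity
  have hn1 : (n : ℝ) - 1 ≠ 0 := by
    have : (2 : ℝ) ≤ n := by exact_mod_cast hn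
    linarith
  refine ((fisherFailureBound_isEquivalent (by omega) hr0 hr1).div IsEquivalent.refl).congr_right
    (Eventually.of_forall fun d => ?_)
  simp only [Pi.div_apply, linearFailureBound, mul_pow]
  field_simp

/-- **Statement 4, case 1.** For a fixed integer `n ≥ 2` and fixed
`√2/2 < r < 1`, with `f(d) = n(n-1)/2^d` (this paper's linear-separability
failure bound) and `g(d) = 1 - [(1 - r^d)(1 - (n-1)(1-r²)^{d/2}/2)]^n`
(the Fisher-separability failure bound), the quotient `g(d)/f(d)` is
asymptotically `(2r)^d/(n-1)`, and consequently `g(d)/f(d) → ∞`. -/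
theorem failure_bounds_quotient_large_r
    (n : ℕ) (hn : 2 ≤ n) (r : ℝ) (hr0 : Real.sqrt 2 / 2 < r) (hr1 : r < 1) :
    Tendsto (fun d : ℕ =>
        ((1 - ((1 - r ^ d) * (1 - ((n : ℝ) - 1) * (1 - r ^ 2) ^ ((d : ℝ) / 2) / 2)) ^ n) /
            ((n : ℝ) * ((n : ℝ) - 1) / 2 ^ d)) /
          ((2 * r) ^ d / ((n : ℝ) - 1)))
      atTop (nhds 1) ∧
    Tendsto (fun d : ℕ =>
        (1 - ((1 - r ^ d) * (1 - ((n : ℝ) - 1) * (1 - r ^ 2) ^ ((d : ℝ) / 2) / 2)) ^ n) /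
          ((n : ℝ) * ((n : ℝ) - 1) / 2 ^ d))
      atTop atTop := by
  have hquot := fisherFailureBound_div_linearFailureBound_isEquivalent hn hr0 hr1
  have hn1 : (0 : ℝ) < n - 1 := by
    have : (2 : ℝ) ≤ n := by exact_mod_cast hn
    linarith
  have h2r : 1 < 2 * r := by nlinarith [Real.one_lt_sqrt_two]
  have hr : 0 < r := by linarith
  refine ⟨(isEquivalent_iff_tendsto_one ?_).1 hquot, hquot.symm.tendsto_atTop ?_⟩
  · exact Eventually.of_forall fun d => by positivity
  · exact (tendsto_pow_atTop_atTop_of_one_lt h2r).atTop_div_const hn1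
end
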